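/- For every 0 < ε < 1/16 and every c ∈ [0, 2], one has (ln τ²_ε)'(c) + (ln τ¹_ε)'(2-c) = 8ε ((ln Φ)'(8εc) - (ln Φ)'(8εc - 16ε)) > 0, where τ¹_ε(c) := 2^{5/2} Φ(-8εc) and τ²_ε(c) := 2^{5/2} Φ(8εc). -/

import Mathlib

/-- The complete elliptic integral of the first kind,
`K(m) = ∫₀¹ dζ / √((1-ζ²)(1-mζ²))`, defined for `m < 1`. -/
noncomputable def ellipticK (m : ℝ) : ℝ :=
  ∫ ζ in (0:ℝ)..1, 1 / Real.sqrt ((1 - ζ ^ 2) * (1 - m * ζ ^ 2))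

/-- `Φ(x) = K((1-√(1-x))/(1+√(1-x))) / √(1+√(1-x))`, defined for `x < 1`. -/
noncomputable def Phi (x : ℝ) : ℝ :=
  ellipticK ((1 - Real.sqrt (1 - x)) / (1 + Real.sqrt (1 - x))) /
    Real.sqrt (1 + Real.sqrt (1 - x))

/-- The period `τ¹_ε(c) = 2^{5/2} Φ(-8εc)`. -/
noncomputable def tau1 (ε c : ℝ) : ℝ := (2:ℝ) ^ ((5:ℝ) / 2) * Phi (-(8 * ε * c))

/-- The period `τ²_ε(c) = 2^{5/2} Φ(8εc)`. -/
noncomputable def tau2 (ε c : ℝ) : ℝ := (2:ℝ) ^ ((5:ℝ) / 2) * Phi (8 * ε * c)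

/-!
Put `s = √(1 - x)`, `a = 1 - ζ²`, `b = 1 + ζ²`. For `m = (1 - s)/(1 + s)` one has
`(1 + s)(1 - ζ²)(1 - mζ²) = a(a + bs)`, so `Φ(x) = M₀(s)` with
`Mₙ(s) = ∫₀¹ (b/(a + bs))ⁿ / √(a(a + bs)) dζ` (`ellipticMoment n s`). The `s`-derivative of
the integrand of `Mₙ` is `-(n + 1/2)` times that of `Mₙ₊₁`, and these integrands are dominated
by `C/√(1 - ζ)` locally uniformly in `s > 0`, so `Mₙ' = -(n + 1/2) Mₙ₊₁` and
`(ln Φ)'(x) = M₁(s)/(4 s M₀(s))`. Since the integrand of `M₁` is the geometric mean of those of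
`M₀` and `M₂`, Cauchy–Schwarz gives `M₁² ≤ M₀ M₂`, which makes `s ↦ M₁/(s M₀)` strictly
decreasing. Hence `(ln Φ)'` is strictly increasing on `(-∞, 1)`; the identity in the theorem is
the chain rule, and its right-hand side is positive because `8εc - 16ε < 8εc < 1`.
-/

open MeasureTheory Set Real Topology
open scoped Interval

theorem sq_integral_le_integral_mul_integral {α : Type*} [MeasurableSpace α] {μ : Measure α}
    {f g h : α → ℝ} (hf : Integrable f μ) (hg : Integrable g μ) (hh : Integrable h μ)
    (hf0 : ∀ᵐ x ∂μ, 0 ≤ f x) (hg0 : ∀ᵐ x ∂μ, 0 ≤ g x) (hfgh : ∀ᵐ x ∂μ, h x ^ 2 ≤ f x * g x) :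
    (∫ x, h x ∂μ) ^ 2 ≤ (∫ x, f x ∂μ) * ∫ x, g x ∂μ := by
  have hquad : ∀ t : ℝ, 0 ≤ (∫ x, f x ∂μ) * (t * t) + (-2 * ∫ x, h x ∂μ) * t + ∫ x, g x ∂μ := by
    intro t
    rw [← integral_mul_const, ← integral_const_mul, ← integral_mul_const,
      ← integral_add (hf.mul_const _) ((hh.const_mul _).mul_const _),
      ← integral_add (f := fun x => f x * (t * t) + -2 * h x * t)
        ((hf.mul_const _).add ((hh.const_mul _).mul_const _)) hg]
    refine integral_nonneg_of_ae ?_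
    filter_upwards [hf0, hg0, hfgh] with x hfx hgx hx
    rcases hfx.eq_or_lt with hfx | hfx
    · have hh0 : h x = 0 := by nlinarith [sq_nonneg (h x)]
      simp [← hfx, hh0, hgx]
    · refine nonneg_of_mul_nonneg_right ?_ hfx
      nlinarith [sq_nonneg (f x * t - h x)]
  have := discrim_le_zero hquad
  unfold discrim at this
  linarith

theorem intervalIntegrable_inv_sqrt_one_sub :
    IntervalIntegrable (fun ζ : ℝ => (√(1 - ζ))⁻¹) volume 0 1 := by
  have := (intervalIntegral.intervalIntegrable_rpow' (a := 1) (b := 0) (r := -(1/2))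
    (by norm_num)).comp_sub_left 1
  simp only [sub_self, sub_zero] at this
  refine this.congr fun x hx => ?_
  rw [uIoc_of_le zero_le_one] at hx
  rw [sqrt_eq_rpow, ← rpow_neg (by linarith [hx.2])]

theorem ae_mem_Ioo_of_mem_uIoc : ∀ᵐ ζ : ℝ, ζ ∈ Ι (0:ℝ) 1 → ζ ∈ Ioo 0 1 := by
  filter_upwards [Measure.ae_ne volume 1] with ζ hζ1 hζ
  rw [uIoc_of_le zero_le_one] at hζ
  exact ⟨hζ.1, hζ.2.lt_of_ne hζ1⟩

theorem IntervalIntegrable.of_norm_le_mul_inv_sqrt_one_sub {f : ℝ → ℝ}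
    (hf : AEStronglyMeasurable f (volume.restrict (Ι (0:ℝ) 1))) (C : ℝ)
    (hle : ∀ ζ ∈ Ioo (0:ℝ) 1, ‖f ζ‖ ≤ C * (√(1 - ζ))⁻¹) :
    IntervalIntegrable f volume 0 1 := by
  refine (intervalIntegrable_inv_sqrt_one_sub.const_mul C).mono_fun' hf ?_
  rw [Filter.EventuallyLE, ae_restrict_iff' measurableSet_uIoc]
  filter_upwards [ae_mem_Ioo_of_mem_uIoc] with ζ hζ hζ' using hle ζ (hζ hζ')

noncomputable def momentKernel (n : ℕ) (a b s : ℝ) : ℝ :=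
  (b / (a + b * s)) ^ n / √(a * (a + b * s))

theorem hasDerivAt_momentKernel (n : ℕ) {a b s : ℝ} (ha : 0 < a) (hs : 0 < a + b * s) :
    HasDerivAt (momentKernel n a b) (-(n + 1 / 2) * momentKernel (n + 1) a b s) s := by
  have hlin : HasDerivAt (fun s => a + b * s) b s := by
    simpa using ((hasDerivAt_id s).const_mul b).const_add a
  have hv : 0 < a * (a + b * s) := mul_pos ha hs
  have hsq : 0 < √(a * (a + b * s)) := sqrt_pos.mpr hv
  have h := ((hasDerivAt_const s b).div hlin hs.ne').pow n |>.div
    ((hlin.const_mul a).sqrt hv.ne') hsq.ne'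
  refine h.congr_deriv ?_
  have hr : (0 * (a + b * s) - b * b) / (a + b * s) ^ 2 = -(b / (a + b * s)) ^ 2 := by
    field_simp
    ring
  have hab : a * b = √(a * (a + b * s)) ^ 2 * (b / (a + b * s)) := by
    rw [sq_sqrt hv.le]; field_simp
  simp only [momentKernel, Pi.div_apply, Pi.pow_apply, hr, hab]
  generalize b / (a + b * s) = r
  generalize √(a * (a + b * s)) = q at hsq
  rcases n with _ | k
  · field_simp
    ring
  · simp only [Nat.add_sub_cancel]
    field_simp
    push_cast
    ring

theorem momentKernel_nonneg (n : ℕ) {a b s : ℝ} (ha : 0 ≤ a) (hb : 0 ≤ b) (hs : 0 ≤ s) :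
    0 ≤ momentKernel n a b s := by
  unfold momentKernel; positivity

theorem momentKernel_pos (n : ℕ) {a b s : ℝ} (ha : 0 < a) (hb : 0 < b) (hs : 0 ≤ s) :
    0 < momentKernel n a b s := by
  unfold momentKernel; positivity

theorem momentKernel_one_sq_eq_mul (a b s : ℝ) :
    momentKernel 1 a b s ^ 2 = momentKernel 0 a b s * momentKernel 2 a b s := by
  unfold momentKernel; ring

theorem momentKernel_le (n : ℕ) {a b s δ : ℝ} (ha : 0 < a) (hb : 1 ≤ b) (hδ : 0 < δ)
    (hδs : δ ≤ s) :
    momentKernel n a b s ≤ (1 / δ) ^ n / √δ * (√a)⁻¹ := by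
  have hr : b / (a + b * s) ≤ 1 / δ := by
    rw [div_le_div_iff₀ (by nlinarith) hδ]; nlinarith
  have hv : √a * √δ ≤ √(a * (a + b * s)) := by
    rw [← sqrt_mul ha.le]
    exact sqrt_le_sqrt (by nlinarith [mul_le_mul_of_nonneg_right hb (hδ.le.trans hδs)])
  unfold momentKernel
  calc (b / (a + b * s)) ^ n / √(a * (a + b * s)) ≤ (1 / δ) ^ n / (√a * √δ) := by
        gcongr
        exact div_nonneg (by linarith) (by nlinarith)
    _ = _ := by field_simp

theorem measurable_momentKernel (n : ℕ) (s : ℝ) :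
    Measurable fun ζ : ℝ => momentKernel n (1 - ζ ^ 2) (1 + ζ ^ 2) s := by
  unfold momentKernel; fun_prop

noncomputable def ellipticMoment (n : ℕ) (s : ℝ) : ℝ :=
  ∫ ζ in (0:ℝ)..1, momentKernel n (1 - ζ ^ 2) (1 + ζ ^ 2) s

section ellipticMoment

variable (n : ℕ) {s : ℝ}

theorem norm_momentKernel_le {ζ δ : ℝ} (hζ : ζ ∈ Ioo (0:ℝ) 1) (hδ : 0 < δ)
    (hδs : δ ≤ s) :
    ‖momentKernel n (1 - ζ ^ 2) (1 + ζ ^ 2) s‖ ≤ (1 / δ) ^ n / √δ * (√(1 - ζ))⁻¹ := by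
  obtain ⟨hζ0, hζ1⟩ := hζ
  have ha : 0 < 1 - ζ ^ 2 := by nlinarith
  rw [Real.norm_of_nonneg (momentKernel_nonneg n ha.le (by positivity) (hδ.le.trans hδs))]
  refine (momentKernel_le n ha (by nlinarith) hδ hδs).trans ?_
  gcongr
  all_goals nlinarith

theorem intervalIntegrable_momentKernel (hs : 0 < s) :
    IntervalIntegrable (fun ζ => momentKernel n (1 - ζ ^ 2) (1 + ζ ^ 2) s) volume 0 1 :=
  .of_norm_le_mul_inv_sqrt_one_sub (measurable_momentKernel n s).aestronglyMeasurable _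
    fun _ hζ => norm_momentKernel_le n hζ hs le_rfl

theorem ellipticMoment_pos (hs : 0 < s) : 0 < ellipticMoment n s := by
  refine intervalIntegral.intervalIntegral_pos_of_pos_on (intervalIntegrable_momentKernel n hs)
    (fun ζ hζ => momentKernel_pos n ?_ (by positivity) hs.le) zero_lt_one
  nlinarith [hζ.1, hζ.2]

theorem hasDerivAt_ellipticMoment (hs : 0 < s) :
    HasDerivAt (ellipticMoment n) (-(n + 1 / 2) * ellipticMoment (n + 1) s) s := by
  have hball : Metric.ball s (s / 2) ∈ 𝓝 s := Metric.ball_mem_nhds s (by linarith)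
  have hlower : ∀ y ∈ Metric.ball s (s / 2), s / 2 ≤ y := fun y hy => by
    rw [Metric.mem_ball, Real.dist_eq, abs_lt] at hy; linarith
  have h := intervalIntegral.hasDerivAt_integral_of_dominated_loc_of_deriv_le
    (F' := fun y ζ => -(n + 1 / 2) * momentKernel (n + 1) (1 - ζ ^ 2) (1 + ζ ^ 2) y)
    (bound := fun ζ => (n + 1 / 2) * ((1 / (s / 2)) ^ (n + 1) / √(s / 2) * (√(1 - ζ))⁻¹))
    hball (.of_forall fun y => (measurable_momentKernel n y).aestronglyMeasurable)
    (intervalIntegrable_momentKernel n hs)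
    ((measurable_momentKernel (n + 1) s).const_mul _).aestronglyMeasurable ?_
    (intervalIntegrable_inv_sqrt_one_sub.const_mul _ |>.const_mul _) ?_
  · rw [intervalIntegral.integral_const_mul] at h
    exact h.2
  · filter_upwards [ae_mem_Ioo_of_mem_uIoc] with ζ hζ hζ' y hy
    rw [norm_mul, norm_neg, Real.norm_of_nonneg (by positivity : (0:ℝ) ≤ n + 1 / 2)]
    gcongr
    exact norm_momentKernel_le (n + 1) (hζ hζ') (by linarith) (hlower y hy)
  · filter_upwards [ae_mem_Ioo_of_mem_uIoc] with ζ hζ hζ' y hy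
    obtain ⟨hζ0, hζ1⟩ := hζ hζ'
    have := hlower y hy
    exact hasDerivAt_momentKernel n (by nlinarith) (by nlinarith)

end ellipticMoment

theorem ellipticMoment_one_sq_le {s : ℝ} (hs : 0 < s) :
    ellipticMoment 1 s ^ 2 ≤ ellipticMoment 0 s * ellipticMoment 2 s := by
  simp only [ellipticMoment, intervalIntegral.integral_of_le zero_le_one]
  refine sq_integral_le_integral_mul_integral (intervalIntegrable_momentKernel 0 hs).1
    (intervalIntegrable_momentKernel 2 hs).1 (intervalIntegrable_momentKernel 1 hs).1
    (.of_forall fun ζ => by unfold momentKernel; positivity)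
    (.of_forall fun ζ => by unfold momentKernel; positivity)
    (.of_forall fun ζ => (momentKernel_one_sq_eq_mul _ _ _).le)

noncomputable def momentRatio (s : ℝ) : ℝ := ellipticMoment 1 s / (s * ellipticMoment 0 s)

theorem hasDerivAt_momentRatio {s : ℝ} (hs : 0 < s) :
    HasDerivAt momentRatio ((-(3 / 2) * ellipticMoment 2 s * (s * ellipticMoment 0 s) -
      ellipticMoment 1 s * (ellipticMoment 0 s - s * (ellipticMoment 1 s / 2))) /
        (s * ellipticMoment 0 s) ^ 2) s := by
  have h := (hasDerivAt_ellipticMoment 1 hs).div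
    ((hasDerivAt_id s).mul (hasDerivAt_ellipticMoment 0 hs))
    (mul_pos hs (ellipticMoment_pos 0 hs)).ne'
  refine h.congr_deriv ?_
  simp only [Pi.mul_apply, id_eq, Nat.cast_zero, Nat.cast_one, Nat.reduceAdd]
  ring

theorem strictAntiOn_momentRatio : StrictAntiOn momentRatio (Ioi 0) := by
  refine strictAntiOn_of_hasDerivWithinAt_neg (convex_Ioi 0)
    (fun s hs => (hasDerivAt_momentRatio hs).continuousAt.continuousWithinAt)
    (fun s hs => (hasDerivAt_momentRatio (interior_subset hs)).hasDerivWithinAt) fun s hs => ?_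
  rw [interior_Ioi, mem_Ioi] at hs
  have hCS := ellipticMoment_one_sq_le hs
  have h0 := ellipticMoment_pos 0 hs
  have h1 := ellipticMoment_pos 1 hs
  have h2 := ellipticMoment_pos 2 hs
  refine div_neg_of_neg_of_pos ?_ (by positivity)
  nlinarith [mul_pos h0 h1, mul_pos hs (mul_pos h0 h2), mul_le_mul_of_nonneg_left hCS hs.le]

theorem Phi_eq_ellipticMoment (x : ℝ) : Phi x = ellipticMoment 0 (√(1 - x)) := by
  have h1s : 0 < 1 + √(1 - x) := by positivity
  rw [Phi, ellipticK, ellipticMoment, ← intervalIntegral.integral_div]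
  refine intervalIntegral.integral_congr fun ζ _ => ?_
  rw [momentKernel, pow_zero, div_div, ← sqrt_mul' _ h1s.le]
  congr 2
  field_simp
  ring

theorem Phi_pos {x : ℝ} (hx : x < 1) : 0 < Phi x := by
  rw [Phi_eq_ellipticMoment]
  exact ellipticMoment_pos 0 (sqrt_pos.2 (by linarith))

theorem hasDerivAt_log_Phi {x : ℝ} (hx : x < 1) :
    HasDerivAt (fun y => log (Phi y)) (momentRatio (√(1 - x)) / 4) x := by
  have hs : 0 < √(1 - x) := sqrt_pos.2 (by linarith)
  have hsqrt := ((hasDerivAt_id' x).const_sub 1).sqrt (by linarith)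
  have hcomp := (hasDerivAt_ellipticMoment 0 hs).comp x hsqrt
  have h := hcomp.log (ellipticMoment_pos 0 hs).ne'
  simp only [Phi_eq_ellipticMoment]
  refine h.congr_deriv ?_
  have := (ellipticMoment_pos 0 hs).ne'
  simp only [momentRatio, Function.comp_apply]
  field_simp
  ring

theorem strictMonoOn_deriv_log_Phi : StrictMonoOn (deriv fun y => log (Phi y)) (Iio 1) := by
  intro x hx y hy hxy
  rw [(hasDerivAt_log_Phi hx).deriv, (hasDerivAt_log_Phi hy).deriv]
  have := strictAntiOn_momentRatio (sqrt_pos.2 (sub_pos.2 hy)) (sqrt_pos.2 (sub_pos.2 hx))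
    (sqrt_lt_sqrt (sub_pos.2 hy).le (by linarith))
  linarith

theorem deriv_log_const_mul_comp_mul {f : ℝ → ℝ} {C k x : ℝ} (hC : C ≠ 0)
    (hf : ∀ᶠ y in 𝓝 (k * x), f y ≠ 0) :
    deriv (fun b => log (C * f (k * b))) x = k * deriv (fun y => log (f y)) (k * x) := by
  have hev : (fun b => log (C * f (k * b))) =ᶠ[𝓝 x] fun b => log C + log (f (k * b)) := by
    filter_upwards [((continuous_const_mul k).tendsto x).eventually hf] with b hb
    exact log_mul hC hb
  rw [hev.deriv_eq, deriv_const_add]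
  exact deriv_comp_mul_left (f := fun y => log (f y)) ..

/-- For `0 < ε < 1/16` and `c ∈ [0,2]`,
`(ln τ²_ε)'(c) + (ln τ¹_ε)'(2-c) = 8ε((ln Φ)'(8εc) - (ln Φ)'(8εc - 16ε)) > 0`. -/
theorem sum_log_deriv_periods (ε : ℝ) (hε0 : 0 < ε) (hε : ε < 1 / 16)
    (c : ℝ) (hc : c ∈ Set.Icc (0:ℝ) 2) :
    deriv (fun b : ℝ => Real.log (tau2 ε b)) c +
      deriv (fun b : ℝ => Real.log (tau1 ε b)) (2 - c) =
      8 * ε * (deriv (fun y : ℝ => Real.log (Phi y)) (8 * ε * c) -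
        deriv (fun y : ℝ => Real.log (Phi y)) (8 * ε * c - 16 * ε)) ∧
    0 < deriv (fun b : ℝ => Real.log (tau2 ε b)) c +
      deriv (fun b : ℝ => Real.log (tau1 ε b)) (2 - c) := by
  obtain ⟨hc0, hc2⟩ := hc
  have hC : (2:ℝ) ^ ((5:ℝ) / 2) ≠ 0 := by positivity
  have hPhi : ∀ y < 1, ∀ᶠ z in 𝓝 y, Phi z ≠ 0 := fun y hy =>
    Filter.eventually_of_mem (Iio_mem_nhds hy) fun z hz => (Phi_pos hz).ne'
  have h2 : deriv (fun b => log (tau2 ε b)) c =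
      8 * ε * deriv (fun y => log (Phi y)) (8 * ε * c) :=
    deriv_log_const_mul_comp_mul hC (hPhi _ (by nlinarith))
  have h1 : deriv (fun b => log (tau1 ε b)) (2 - c) =
      -(8 * ε) * deriv (fun y => log (Phi y)) (8 * ε * c - 16 * ε) := by
    have := deriv_log_const_mul_comp_mul (f := Phi) (k := -(8 * ε)) (x := 2 - c) hC
      (hPhi _ (by nlinarith))
    rw [show -(8 * ε) * (2 - c) = 8 * ε * c - 16 * ε by ring] at this
    simpa only [tau1, neg_mul] using this
  have hmono := strictMonoOn_deriv_log_Phi (a := 8 * ε * c - 16 * ε) (b := 8 * ε * c)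
    (mem_Iio.2 (by nlinarith)) (mem_Iio.2 (by nlinarith)) (by linarith)
  rw [h1, h2]
  constructor
  · ring
  · nlinarith
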